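/- Let G be a finite simple graph whose vertex set admits a partition V(G) = V₁ ∪ V₂ such that each induced subgraph G[V_i] (i ∈ {1,2}) contains at least two universal vertices of G[V_i]. Then Dominator wins the S-game on G within two moves (i.e., γ'MB(G) ≤ 2). -/
import Mathlib


/-- `D` is a dominating set of `G`: every vertex not in `D` has a neighbor in `D`. -/
def Dominating {V : Type*} (G : SimpleGraph V) (D : Set V) : Prop :=
  ∀ v, v ∉ D → ∃ d ∈ D, G.Adj d v

/-- Dominator wins the S-game on `G` within one move. -/
def WinsWithin1 {V : Type*} (G : SimpleGraph V) : Prop :=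
  ∀ s₁ : V, ∃ d₁, d₁ ≠ s₁ ∧ Dominating G {d₁}

/-- Dominator wins the S-game on `G` within two moves. -/
def WinsWithin2 {V : Type*} (G : SimpleGraph V) : Prop :=
  ∀ s₁ : V, ∃ d₁, d₁ ≠ s₁ ∧
    (Dominating G {d₁} ∨
      ∀ s₂, s₂ ∉ ({s₁, d₁} : Set V) →
        ∃ d₂, d₂ ∉ ({s₁, d₁, s₂} : Set V) ∧ Dominating G {d₁, d₂})

/-- `γ'MB(G) = 2`: Dominator wins the S-game within two moves but not within one. -/
def MBPrimeEqTwo {V : Type*} (G : SimpleGraph V) : Prop :=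
  WinsWithin2 G ∧ ¬ WinsWithin1 G

/-- `G` is `2`-`γ'MB`-critical: `γ'MB(G) = 2` and for every edge `e`, Dominator does not
win the S-game on `G - e` within two moves. -/
def Critical2 {V : Type*} (G : SimpleGraph V) : Prop :=
  MBPrimeEqTwo G ∧ ∀ u v : V, G.Adj u v → ¬ WinsWithin2 (G.deleteEdges {s(u, v)})

/-- `v` is a universal vertex of the subgraph of `G` induced on `C`:
`v ∈ C` and `v` is adjacent in `G` to every other vertex of `C`. -/
def UnivIn {V : Type*} (G : SimpleGraph V) (C : Set V) (v : V) : Prop :=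
  v ∈ C ∧ ∀ u ∈ C, u ≠ v → G.Adj v u

lemma stmt8_aux {V : Type*} (G : SimpleGraph V) (A B : Set V)
    (hdisj : Disjoint A B) (hunion : A ∪ B = Set.univ)
    (h₁ : ∃ u v, u ≠ v ∧ UnivIn G A u ∧ UnivIn G A v)
    (h₂ : ∃ u v, u ≠ v ∧ UnivIn G B u ∧ UnivIn G B v)
    (s₁ : V) (hs : s₁ ∈ A) :
    ∃ d₁, d₁ ≠ s₁ ∧
    (Dominating G {d₁} ∨
      ∀ s₂, s₂ ∉ ({s₁, d₁} : Set V) →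
        ∃ d₂, d₂ ∉ ({s₁, d₁, s₂} : Set V) ∧ Dominating G {d₁, d₂}) := by
  obtain ⟨a, a', haa', ha, ha'⟩ := h₁
  obtain ⟨b, b', hbb', hb, hb'⟩ := h₂
  obtain ⟨d₁, hd₁s, hd₁⟩ : ∃ d₁, d₁ ≠ s₁ ∧ UnivIn G A d₁ := by
    by_cases h : a = s₁
    · exact ⟨a', by rintro rfl; exact haa' h, ha'⟩
    · exact ⟨a, h, ha⟩
  refine ⟨d₁, hd₁s, Or.inr fun s₂ hs₂ => ?_⟩
  obtain ⟨d₂, hd₂s, hd₂⟩ : ∃ d₂, d₂ ≠ s₂ ∧ UnivIn G B d₂ := by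
    by_cases h : b = s₂
    · exact ⟨b', by rintro rfl; exact hbb' h, hb'⟩
    · exact ⟨b, h, hb⟩
  have hAB : ∀ x ∈ A, ∀ y ∈ B, x ≠ y := fun x hx y hy h => by
    exact Set.disjoint_left.mp hdisj hx (h ▸ hy)
  refine ⟨d₂, ?_, ?_⟩
  · intro h
    rcases h with h | h | h
    · exact hAB s₁ hs d₂ hd₂.1 h.symm
    · exact hAB d₁ hd₁.1 d₂ hd₂.1 h.symm
    · exact hd₂s h
  · intro v hv
    have hv₁ : v ≠ d₁ := fun h => hv (by simp [h])
    have hv₂ : v ≠ d₂ := fun h => hv (by simp [h])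
    rcases (by rw [hunion]; trivial : v ∈ A ∪ B) with h | h
    · exact ⟨d₁, by simp, hd₁.2 v h hv₁⟩
    · exact ⟨d₂, by simp, hd₂.2 v h hv₂⟩

theorem stmt8 {V : Type*} [Fintype V] (G : SimpleGraph V) (V₁ V₂ : Set V)
    (hdisj : Disjoint V₁ V₂) (hunion : V₁ ∪ V₂ = Set.univ)
    (h₁ : ∃ u v, u ≠ v ∧ UnivIn G V₁ u ∧ UnivIn G V₁ v)
    (h₂ : ∃ u v, u ≠ v ∧ UnivIn G V₂ u ∧ UnivIn G V₂ v) :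
    WinsWithin2 G := by
  intro s₁
  rcases (by rw [hunion]; trivial : s₁ ∈ V₁ ∪ V₂) with hs | hs
  · exact stmt8_aux G V₁ V₂ hdisj hunion h₁ h₂ s₁ hs
  · exact stmt8_aux G V₂ V₁ hdisj.symm (by rw [Set.union_comm]; exact hunion) h₂ h₁ s₁ hs
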